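/- The n-th Bell number equals the n-th moment of a Poisson random variable with intensity 1: B_n = Σ_{k=1}^n S(n,k) = E[X^n] where X ∼ Poisson(1), i.e., B_n = e^{-1} Σ_{m≥0} m^n / m!. -/

import Mathlib

/-! Sorting the maps `α → Fin m` by the partition of `α` into their fibers gives
`m ^ |α| = ∑_P m (m - 1) ⋯ (m - |P| + 1)`, and for every `k`
`∑_m m (m - 1) ⋯ (m - k + 1) / m! = ∑_j 1 / j! = e`;
summing over `m` yields `∑_m m ^ |α| / m! = e · B_|α|`. -/

open Finset

/-- For a surjection `π`, the maps `f` with the same fibers as `π` are exactly `g ∘ π` with `g`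
injective. -/
noncomputable def Function.Surjective.sameFibersEquivEmbedding {α β γ : Type*} {π : α → γ}
    (hπ : Function.Surjective π) :
    {f : α → β // ∀ a b, f a = f b ↔ π a = π b} ≃ (γ ↪ β) where
  toFun f := ⟨f.1 ∘ Function.surjInv hπ, fun c c' h => by
    simpa [Function.surjInv_eq hπ] using (f.2 _ _).1 h⟩
  invFun g := ⟨g ∘ π, fun _ _ => g.injective.eq_iff⟩
  left_inv f := Subtype.ext <| funext fun a =>
    (f.2 _ _).2 (Function.surjInv_eq hπ (π a))
  right_inv g := DFunLike.ext _ _ fun c => congrArg g (Function.surjInv_eq hπ c)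

theorem Function.Surjective.card_sameFibers {α β γ : Type*} [Fintype α] [DecidableEq α]
    [Fintype β] [DecidableEq β] [Fintype γ] [DecidableEq γ] {π : α → γ}
    (hπ : Function.Surjective π) :
    Fintype.card {f : α → β // ∀ a b, f a = f b ↔ π a = π b} =
      (Fintype.card β).descFactorial (Fintype.card γ) := by
  rw [Fintype.card_congr hπ.sameFibersEquivEmbedding, Fintype.card_embedding_eq]

namespace Finpartition

variable {α : Type*} [DecidableEq α]

theorem ext_part {s : Finset α} {P Q : Finpartition s} (h : ∀ a, P.part a = Q.part a) :
    P = Q := by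
  suffices key : ∀ P Q : Finpartition s, (∀ a, P.part a = Q.part a) → P.parts ⊆ Q.parts from
    Finpartition.ext ((key P Q h).antisymm (key Q P fun a => (h a).symm))
  intro P Q h t ht
  obtain ⟨a, ha⟩ := P.nonempty_of_mem_parts ht
  rw [← P.part_eq_of_mem ht ha, h a]
  exact Q.part_mem.2 (P.subset ht ha)

variable [Fintype α]

def ker {β : Type*} [DecidableEq β] (f : α → β) : Finpartition (univ : Finset α) :=
  haveI : DecidableRel (Setoid.ker f).r := fun a b => decEq (f a) (f b)
  ofSetoid (Setoid.ker f)

theorem mem_part_ker {β : Type*} [DecidableEq β] (f : α → β) (a b : α) :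
    b ∈ (ker f).part a ↔ f a = f b :=
  mem_part_ofSetoid_iff_rel

def toParts (P : Finpartition (univ : Finset α)) (a : α) : P.parts :=
  ⟨P.part a, P.part_mem.2 (mem_univ a)⟩

theorem toParts_surjective (P : Finpartition (univ : Finset α)) :
    Function.Surjective P.toParts := by
  rintro ⟨t, ht⟩
  obtain ⟨a, ha⟩ := P.nonempty_of_mem_parts ht
  exact ⟨a, Subtype.ext (P.part_eq_of_mem ht ha)⟩

theorem ker_eq_iff {β : Type*} [DecidableEq β] (f : α → β)
    (P : Finpartition (univ : Finset α)) :
    ker f = P ↔ ∀ a b, f a = f b ↔ P.toParts a = P.toParts b := by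
  have hP : ∀ a b, b ∈ P.part a ↔ P.toParts a = P.toParts b := fun a b => by
    rw [toParts, toParts, Subtype.mk.injEq, eq_comm,
      P.mem_part_iff_part_eq_part (mem_univ b) (mem_univ a)]
  constructor
  · rintro rfl a b
    rw [← mem_part_ker, hP]
  · intro h
    exact ext_part fun a => Finset.ext fun b => by rw [mem_part_ker, h, hP]

theorem card_fiber_ker {β : Type*} [Fintype β] [DecidableEq β]
    (P : Finpartition (univ : Finset α)) :
    Fintype.card {f : α → β // ker f = P} = (Fintype.card β).descFactorial #P.parts := by
  rw [Fintype.card_congr (Equiv.subtypeEquivRight fun f => ker_eq_iff f P),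
    P.toParts_surjective.card_sameFibers, Fintype.card_coe]

end Finpartition

theorem Fintype.card_pow_eq_sum_descFactorial (α β : Type*) [Fintype α] [DecidableEq α]
    [Fintype β] [DecidableEq β] :
    Fintype.card β ^ Fintype.card α =
      ∑ P : Finpartition (univ : Finset α), (Fintype.card β).descFactorial #P.parts := by
  rw [← Fintype.card_fun, ← Fintype.card_congr (Equiv.sigmaFiberEquiv Finpartition.ker),
    Fintype.card_sigma]
  simp only [Finpartition.card_fiber_ker]

theorem hasSum_descFactorial_div_factorial (k : ℕ) :
    HasSum (fun m : ℕ => (m.descFactorial k : ℝ) / m.factorial) (Real.exp 1) := by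
  rw [← hasSum_nat_add_iff' k]
  have h_head : ∑ i ∈ range k, (i.descFactorial k : ℝ) / i.factorial = 0 :=
    sum_eq_zero fun i hi => by
      rw [Nat.descFactorial_eq_zero_iff_lt.2 (mem_range.1 hi), Nat.cast_zero, zero_div]
  have h_tail (j : ℕ) :
      ((j + k).descFactorial k : ℝ) / (j + k).factorial = 1 ^ j / j.factorial := by
    rw [one_pow, div_eq_div_iff (by positivity) (by positivity), one_mul, ← Nat.cast_mul,
      ← Nat.factorial_mul_descFactorial (Nat.le_add_left k j), Nat.add_sub_cancel, mul_comm]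
  simpa only [h_head, sub_zero, h_tail, Real.exp_eq_exp_ℝ]
    using NormedSpace.expSeries_div_hasSum_exp (1 : ℝ)

/-- Dobiński's formula. -/
theorem hasSum_pow_card_div_factorial (α : Type*) [Fintype α] [DecidableEq α] :
    HasSum (fun m : ℕ => (m : ℝ) ^ Fintype.card α / m.factorial)
      (Real.exp 1 * Fintype.card (Finpartition (univ : Finset α))) := by
  have h_pow (m : ℕ) : (m : ℝ) ^ Fintype.card α / m.factorial =
      ∑ P : Finpartition (univ : Finset α), (m.descFactorial #P.parts : ℝ) / m.factorial := by
    simpa [sum_div] using congrArg (fun x : ℕ => (x : ℝ) / m.factorial)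
      (Fintype.card_pow_eq_sum_descFactorial α (Fin m))
  have h_sum := hasSum_sum (s := univ) fun (P : Finpartition (univ : Finset α)) _ =>
    hasSum_descFactorial_div_factorial #P.parts
  rw [sum_const, card_univ, nsmul_eq_mul'] at h_sum
  exact h_sum.congr_fun h_pow

theorem Finpartition.card_eq_sum_card_parts_eq (α : Type*) [Fintype α] [DecidableEq α]
    [Nonempty α] :
    Nat.card (Finpartition (univ : Finset α)) =
      ∑ k ∈ Icc 1 (Fintype.card α),
        Nat.card {P : Finpartition (univ : Finset α) // #P.parts = k} := by
  have h_range (P : Finpartition (univ : Finset α)) : #P.parts ∈ Icc 1 (Fintype.card α) :=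
    mem_Icc.2 ⟨card_pos.2 (P.parts_nonempty univ_nonempty.ne_empty), P.card_parts_le_card⟩
  rw [Nat.card_eq_fintype_card, ← card_univ,
    card_eq_sum_card_fiberwise fun P _ => h_range P]
  simp only [Nat.card_eq_fintype_card, Fintype.card_subtype]

/-- **Bell numbers as Poisson moments.**  For `n ≥ 1`, the `n`-th Bell number
`B_n` (the number of set partitions of `[n]`) equals `∑_{k=1}^n S(n,k)` where `S(n,k)`
is the Stirling number of the second kind (the number of partitions into exactly `k`
blocks), and equals the `n`-th moment of a Poisson random variable of intensity `1`:
`B_n = E[X^n] = e^{-1} ∑_{m≥0} m^n / m!`. -/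
theorem bell_number_eq_poisson_moment (n : ℕ) (hn : 1 ≤ n) :
    Nat.card (Finpartition (Finset.univ : Finset (Fin n)))
        = ∑ k ∈ Finset.Icc 1 n,
            Nat.card {σ : Finpartition (Finset.univ : Finset (Fin n)) // σ.parts.card = k} ∧
    (Nat.card (Finpartition (Finset.univ : Finset (Fin n))) : ℝ)
        = Real.exp (-1) * ∑' m : ℕ, (m : ℝ) ^ n / m.factorial := by
  have : Nonempty (Fin n) := ⟨⟨0, hn⟩⟩
  refine ⟨by simpa using Finpartition.card_eq_sum_card_parts_eq (Fin n), ?_⟩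
  have h_tsum := (hasSum_pow_card_div_factorial (Fin n)).tsum_eq
  rw [Fintype.card_fin] at h_tsum
  rw [h_tsum, Nat.card_eq_fintype_card, Real.exp_neg, inv_mul_cancel_left₀ (Real.exp_pos 1).ne']
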